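/- arXiv:2401.14871 — 4 statements merged into one kernel-verified Lean document; each statement's English description precedes it below -/
import Mathlib

section
/- The feasible set of the indirect certainty-equivalence LQR problem and the feasible set S of the covariance-parameterized LQR problem are in bijective correspondence under the change of variables V = Φ⁻¹[Kᵀ, Iₙ]ᵀ: K is feasible for the certainty-equivalence problem (i.e. ρ(Â + B̂K) < 1) if and only if V := Φ⁻¹[Kᵀ, Iₙ]ᵀ ∈ S, in which case the two costs coincide, i.e. C_CE(K) = J(V). Consequently the optimal values coincide: J* = C_CE*. -/
open Matrix

noncomputable section

/-- Euclidean norm of a vector. -/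
def eNorm {ι : Type*} [Fintype ι] (v : ι → ℝ) : ℝ :=
  Real.sqrt (∑ i, v i ^ 2)

/-- Frobenius norm of a matrix. -/
def frobNorm {ι κ : Type*} [Fintype ι] [Fintype κ] (A : Matrix ι κ ℝ) : ℝ :=
  Real.sqrt (∑ i, ∑ j, A i j ^ 2)

/-- Spectral (operator 2-) norm of a matrix. -/
def spNorm {ι κ : Type*} [Fintype ι] [Fintype κ] (A : Matrix ι κ ℝ) : ℝ :=
  sSup {r : ℝ | ∃ v : κ → ℝ, eNorm v = 1 ∧ r = eNorm (A.mulVec v)}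

/-- Smallest singular value of a matrix `A`, i.e. the square root of the smallest
eigenvalue of `A * Aᵀ`, expressed as `inf_{‖u‖ = 1} ‖Aᵀ u‖`. -/
def sigMin {ι κ : Type*} [Fintype ι] [Fintype κ] (A : Matrix ι κ ℝ) : ℝ :=
  sInf {r : ℝ | ∃ u : ι → ℝ, eNorm u = 1 ∧ r = eNorm (A.vecMul u)}

/-- `ρ(A) < 1` : the spectral radius of the real square matrix `A` (i.e. the
largest modulus of a complex eigenvalue) is smaller than one. -/
def specLt1 {ι : Type*} [Fintype ι] [DecidableEq ι] (A : Matrix ι ι ℝ) : Prop :=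
  spectralRadius ℂ (A.map Complex.ofReal) < 1

/-- Right inverse `M† = Mᵀ (M Mᵀ)⁻¹` of a full-row-rank matrix. -/
def pinv {ι κ : Type*} [Fintype ι] [Fintype κ] [DecidableEq ι] (A : Matrix ι κ ℝ) :
    Matrix κ ι ℝ :=
  Aᵀ * (A * Aᵀ)⁻¹

/-- Orthogonal projection `Π_A = I - A† A` onto the nullspace of `A`. -/
def projNull {ι κ : Type*} [Fintype ι] [Fintype κ] [DecidableEq ι] [DecidableEq κ]
    (A : Matrix ι κ ℝ) : Matrix κ κ ℝ :=
  1 - pinv A * A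

/-- `Σ(M) = ∑_{i≥0} Mⁱ (Mᵀ)ⁱ`, the unique solution of the discrete Lyapunov
equation `Σ = I + M Σ Mᵀ` when `ρ(M) < 1`. -/
def lyap {k : ℕ} (M : Matrix (Fin k) (Fin k) ℝ) : Matrix (Fin k) (Fin k) ℝ :=
  ∑' i : ℕ, M ^ i * (Mᵀ) ^ i

variable {n m t : ℕ}

/-- Stacked data matrix `D₀ = [U₀; X₀]`. -/
def Dmat (U0 : Matrix (Fin m) (Fin t) ℝ) (X0 : Matrix (Fin n) (Fin t) ℝ) :
    Matrix (Fin m ⊕ Fin n) (Fin t) ℝ :=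
  Matrix.fromRows U0 X0

/-- `Ū₀ = (1/t) U₀ D₀ᵀ`. -/
def Ubar (U0 : Matrix (Fin m) (Fin t) ℝ) (X0 : Matrix (Fin n) (Fin t) ℝ) :
    Matrix (Fin m) (Fin m ⊕ Fin n) ℝ :=
  (t : ℝ)⁻¹ • (U0 * (Dmat U0 X0)ᵀ)

/-- `X̄₀ = (1/t) X₀ D₀ᵀ`. -/
def Xbar0 (U0 : Matrix (Fin m) (Fin t) ℝ) (X0 : Matrix (Fin n) (Fin t) ℝ) :
    Matrix (Fin n) (Fin m ⊕ Fin n) ℝ :=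
  (t : ℝ)⁻¹ • (X0 * (Dmat U0 X0)ᵀ)

/-- `X̄₁ = (1/t) X₁ D₀ᵀ`. -/
def Xbar1 (U0 : Matrix (Fin m) (Fin t) ℝ) (X0 X1 : Matrix (Fin n) (Fin t) ℝ) :
    Matrix (Fin n) (Fin m ⊕ Fin n) ℝ :=
  (t : ℝ)⁻¹ • (X1 * (Dmat U0 X0)ᵀ)

/-- Sample covariance `Φ = (1/t) D₀ D₀ᵀ`. -/
def Phi (U0 : Matrix (Fin m) (Fin t) ℝ) (X0 : Matrix (Fin n) (Fin t) ℝ) :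
    Matrix (Fin m ⊕ Fin n) (Fin m ⊕ Fin n) ℝ :=
  (t : ℝ)⁻¹ • (Dmat U0 X0 * (Dmat U0 X0)ᵀ)

/-- The feasible set `S = {V : X̄₀ V = I, ρ(X̄₁ V) < 1}`. -/
def feasSet (U0 : Matrix (Fin m) (Fin t) ℝ) (X0 X1 : Matrix (Fin n) (Fin t) ℝ) :
    Set (Matrix (Fin m ⊕ Fin n) (Fin n) ℝ) :=
  {V | Xbar0 U0 X0 * V = 1 ∧ specLt1 (Xbar1 U0 X0 X1 * V)}

/-- The closed-loop Lyapunov solution `Σ_V`, i.e. the unique solution of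
`Σ_V = I + (X̄₁ V) Σ_V (X̄₁ V)ᵀ` when `V ∈ S`. -/
def SigV (U0 : Matrix (Fin m) (Fin t) ℝ) (X0 X1 : Matrix (Fin n) (Fin t) ℝ)
    (V : Matrix (Fin m ⊕ Fin n) (Fin n) ℝ) : Matrix (Fin n) (Fin n) ℝ :=
  lyap (Xbar1 U0 X0 X1 * V)

/-- `P_V`, the unique solution of `P = Q + Vᵀ Ū₀ᵀ R Ū₀ V + (X̄₁V)ᵀ P (X̄₁V)`
when `V ∈ S`, given by its convergent series. -/
def PV (U0 : Matrix (Fin m) (Fin t) ℝ) (X0 X1 : Matrix (Fin n) (Fin t) ℝ)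
    (Q : Matrix (Fin n) (Fin n) ℝ) (R : Matrix (Fin m) (Fin m) ℝ)
    (V : Matrix (Fin m ⊕ Fin n) (Fin n) ℝ) : Matrix (Fin n) (Fin n) ℝ :=
  ∑' i : ℕ, ((Xbar1 U0 X0 X1 * V)ᵀ) ^ i *
      (Q + Vᵀ * (Ubar U0 X0)ᵀ * R * Ubar U0 X0 * V) * (Xbar1 U0 X0 X1 * V) ^ i

/-- The covariance-parameterized LQR cost `J(V)`. -/
def Jcost (U0 : Matrix (Fin m) (Fin t) ℝ) (X0 X1 : Matrix (Fin n) (Fin t) ℝ)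
    (Q : Matrix (Fin n) (Fin n) ℝ) (R : Matrix (Fin m) (Fin m) ℝ)
    (V : Matrix (Fin m ⊕ Fin n) (Fin n) ℝ) : ℝ :=
  Matrix.trace ((Q + Vᵀ * (Ubar U0 X0)ᵀ * R * Ubar U0 X0 * V) * SigV U0 X0 X1 V)

/-- `J* = inf_{V ∈ S} J(V)`. -/
def Jstar (U0 : Matrix (Fin m) (Fin t) ℝ) (X0 X1 : Matrix (Fin n) (Fin t) ℝ)
    (Q : Matrix (Fin n) (Fin n) ℝ) (R : Matrix (Fin m) (Fin m) ℝ) : ℝ :=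
  sInf (Jcost U0 X0 X1 Q R '' feasSet U0 X0 X1)

/-- Sublevel set `S(a) = {V ∈ S : J(V) ≤ a}`. -/
def subLevel (U0 : Matrix (Fin m) (Fin t) ℝ) (X0 X1 : Matrix (Fin n) (Fin t) ℝ)
    (Q : Matrix (Fin n) (Fin n) ℝ) (R : Matrix (Fin m) (Fin m) ℝ) (a : ℝ) :
    Set (Matrix (Fin m ⊕ Fin n) (Fin n) ℝ) :=
  {V | V ∈ feasSet U0 X0 X1 ∧ Jcost U0 X0 X1 Q R V ≤ a}

/-- The gradient `∇J(V) = 2 (Ū₀ᵀ R Ū₀ + X̄₁ᵀ P_V X̄₁) V Σ_V`. -/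
def gradJ (U0 : Matrix (Fin m) (Fin t) ℝ) (X0 X1 : Matrix (Fin n) (Fin t) ℝ)
    (Q : Matrix (Fin n) (Fin n) ℝ) (R : Matrix (Fin m) (Fin m) ℝ)
    (V : Matrix (Fin m ⊕ Fin n) (Fin n) ℝ) : Matrix (Fin m ⊕ Fin n) (Fin n) ℝ :=
  (2 : ℝ) • (((Ubar U0 X0)ᵀ * R * Ubar U0 X0 +
      (Xbar1 U0 X0 X1)ᵀ * PV U0 X0 X1 Q R V * Xbar1 U0 X0 X1) * V * SigV U0 X0 X1 V)

/-- `ξ(a) = ‖Ū₀‖² ‖R‖ + ‖X̄₁‖² a`. -/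
def xiC (U0 : Matrix (Fin m) (Fin t) ℝ) (X0 X1 : Matrix (Fin n) (Fin t) ℝ)
    (R : Matrix (Fin m) (Fin m) ℝ) (a : ℝ) : ℝ :=
  spNorm (Ubar U0 X0) ^ 2 * spNorm R + spNorm (Xbar1 U0 X0 X1) ^ 2 * a

/-- Smoothness constant `l(a)`. -/
def lC (U0 : Matrix (Fin m) (Fin t) ℝ) (X0 X1 : Matrix (Fin n) (Fin t) ℝ)
    (Q : Matrix (Fin n) (Fin n) ℝ) (R : Matrix (Fin m) (Fin m) ℝ) (a : ℝ) : ℝ :=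
  4 * a ^ 2 * (xiC U0 X0 X1 R a + a - sigMin Q) * frobNorm (Xbar1 U0 X0 X1) ^ 2 / sigMin Q ^ 2 +
    2 * xiC U0 X0 X1 R a * a / sigMin Q

/-- Gradient-dominance constant `μ(a) = 4a²/(σ̲(Q)^{3/2} σ̲(R)^{1/2} σ̲(Ū₀))`. -/
def muC (U0 : Matrix (Fin m) (Fin t) ℝ) (X0 : Matrix (Fin n) (Fin t) ℝ)
    (Q : Matrix (Fin n) (Fin n) ℝ) (R : Matrix (Fin m) (Fin m) ℝ) (a : ℝ) : ℝ :=
  4 * a ^ 2 / (Real.sqrt (sigMin Q) ^ 3 * Real.sqrt (sigMin R) * sigMin (Ubar U0 X0))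

/-- Reparameterized cost `f(L, Σ) = Tr(QΣ) + Tr(L Σ⁻¹ Lᵀ Ū₀ᵀ R Ū₀)`. -/
def fRep (U0 : Matrix (Fin m) (Fin t) ℝ) (X0 : Matrix (Fin n) (Fin t) ℝ)
    (Q : Matrix (Fin n) (Fin n) ℝ) (R : Matrix (Fin m) (Fin m) ℝ)
    (L : Matrix (Fin m ⊕ Fin n) (Fin n) ℝ) (Sg : Matrix (Fin n) (Fin n) ℝ) : ℝ :=
  Matrix.trace (Q * Sg) + Matrix.trace (L * Sg⁻¹ * Lᵀ * (Ubar U0 X0)ᵀ * R * Ubar U0 X0)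

/-- Feasible set `ℒ` of the convex reparameterization. -/
def repSet (U0 : Matrix (Fin m) (Fin t) ℝ) (X0 X1 : Matrix (Fin n) (Fin t) ℝ) :
    Set (Matrix (Fin m ⊕ Fin n) (Fin n) ℝ × Matrix (Fin n) (Fin n) ℝ) :=
  {p | p.2.IsSymm ∧ p.2 = Xbar0 U0 X0 * p.1 ∧
    (Matrix.fromBlocks (p.2 - 1) (Xbar1 U0 X0 X1 * p.1)
      ((Xbar1 U0 X0 X1 * p.1)ᵀ) p.2).PosSemidef}

/-- `p(a) = (16a³/(σ̲(Q)²ζ)) (1 + a/σ̲(Q)) (1 + √(a/σ̲(R)))`. -/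
def pC (Q : Matrix (Fin n) (Fin n) ℝ) (R : Matrix (Fin m) (Fin m) ℝ) (ζ a : ℝ) : ℝ :=
  16 * a ^ 3 / (sigMin Q ^ 2 * ζ) * (1 + a / sigMin Q) * (1 + Real.sqrt (a / sigMin R))

/-
The change of variables `V = Φ⁻¹ [K; I]` is pure linear algebra. Since `Φ` is the matrix
stacking `Ū₀` over `X̄₀`, `Φ V = [K; I]` says exactly that `Ū₀ V = K` and `X̄₀ V = I`, and the
inverse map is `V ↦ Ū₀ V`. Moreover `X̄₁ Φ⁻¹ = X₁ D₀†`, so the closed-loop matrix `X̄₁ V` is the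
certainty-equivalence closed loop `Â + B̂K = X₁ D₀† [K; I]`. Hence the two stability conditions,
the two Lyapunov solutions and the two costs coincide, and so do the infima.
-/

namespace Matrix

variable {ι κ₁ κ₂ ν α : Type*} [Fintype ι] [DecidableEq ι] [Fintype κ₁] [Fintype κ₂]
  [DecidableEq κ₁] [DecidableEq κ₂]

theorem inv_smul_of_ne_zero [Field α] (A : Matrix ι ι α) {k : α} (hk : k ≠ 0) :
    (k • A)⁻¹ = k⁻¹ • A⁻¹ := by
  by_cases hA : IsUnit A.det
  · exact inv_smul' A (Units.mk0 k hk) hA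
  · have hkA : ¬IsUnit (k • A).det := by simpa [det_smul, hk] using hA
    rw [nonsing_inv_apply_not_isUnit _ hA, nonsing_inv_apply_not_isUnit _ hkA, smul_zero]

theorem mul_inv_fromRows_mul_fromRows [CommRing α] {A : Matrix κ₁ (κ₁ ⊕ κ₂) α}
    {B : Matrix κ₂ (κ₁ ⊕ κ₂) α} (h : IsUnit (fromRows A B).det)
    (K : Matrix κ₁ ν α) (L : Matrix κ₂ ν α) :
    A * ((fromRows A B)⁻¹ * fromRows K L) = K ∧ B * ((fromRows A B)⁻¹ * fromRows K L) = L := by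
  have hcancel := mul_nonsing_inv_cancel_left (fromRows A B) (fromRows K L) h
  rw [fromRows_mul] at hcancel
  exact fromRows_inj hcancel

theorem inv_fromRows_mul_fromRows_mul [CommRing α] {A : Matrix κ₁ (κ₁ ⊕ κ₂) α}
    {B : Matrix κ₂ (κ₁ ⊕ κ₂) α} (h : IsUnit (fromRows A B).det) (V : Matrix (κ₁ ⊕ κ₂) ν α) :
    (fromRows A B)⁻¹ * fromRows (A * V) (B * V) = V := by
  rw [← fromRows_mul, nonsing_inv_mul_cancel_left _ _ h]

end Matrix

section CovarianceParameterization

def covParam (U0 : Matrix (Fin m) (Fin t) ℝ) (X0 : Matrix (Fin n) (Fin t) ℝ)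
    (K : Matrix (Fin m) (Fin n) ℝ) : Matrix (Fin m ⊕ Fin n) (Fin n) ℝ :=
  (Phi U0 X0)⁻¹ * Matrix.fromRows K (1 : Matrix (Fin n) (Fin n) ℝ)

def ceClosedLoop (U0 : Matrix (Fin m) (Fin t) ℝ) (X0 X1 : Matrix (Fin n) (Fin t) ℝ)
    (K : Matrix (Fin m) (Fin n) ℝ) : Matrix (Fin n) (Fin n) ℝ :=
  X1 * pinv (Dmat U0 X0) * Matrix.fromRows K (1 : Matrix (Fin n) (Fin n) ℝ)

variable (U0 : Matrix (Fin m) (Fin t) ℝ) (X0 X1 : Matrix (Fin n) (Fin t) ℝ)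

theorem Phi_eq_fromRows : Phi U0 X0 = Matrix.fromRows (Ubar U0 X0) (Xbar0 U0 X0) := by
  ext (i | i) j <;> rfl

theorem Xbar1_mul_Phi_inv (ht : 0 < t) :
    Xbar1 U0 X0 X1 * (Phi U0 X0)⁻¹ = X1 * pinv (Dmat U0 X0) := by
  have htR : (t : ℝ) ≠ 0 := by positivity
  rw [Xbar1, Phi, inv_smul_of_ne_zero _ (inv_ne_zero htR), inv_inv, Matrix.smul_mul,
    Matrix.mul_smul, smul_smul, inv_mul_cancel₀ htR, one_smul, pinv, Matrix.mul_assoc]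

variable {U0 X0}

theorem isUnit_det_fromRows_Ubar_Xbar0 (hPhi : (Phi U0 X0).PosDef) :
    IsUnit (Matrix.fromRows (Ubar U0 X0) (Xbar0 U0 X0)).det := by
  rw [← Phi_eq_fromRows, ← isUnit_iff_isUnit_det]
  exact hPhi.isUnit

variable (K : Matrix (Fin m) (Fin n) ℝ)

theorem Ubar_mul_covParam (hPhi : (Phi U0 X0).PosDef) : Ubar U0 X0 * covParam U0 X0 K = K := by
  rw [covParam, Phi_eq_fromRows]
  exact (mul_inv_fromRows_mul_fromRows (isUnit_det_fromRows_Ubar_Xbar0 hPhi) K 1).1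

theorem Xbar0_mul_covParam (hPhi : (Phi U0 X0).PosDef) : Xbar0 U0 X0 * covParam U0 X0 K = 1 := by
  rw [covParam, Phi_eq_fromRows]
  exact (mul_inv_fromRows_mul_fromRows (isUnit_det_fromRows_Ubar_Xbar0 hPhi) K 1).2

theorem Xbar1_mul_covParam (ht : 0 < t) :
    Xbar1 U0 X0 X1 * covParam U0 X0 K = ceClosedLoop U0 X0 X1 K := by
  rw [covParam, ceClosedLoop, ← Matrix.mul_assoc, Xbar1_mul_Phi_inv _ _ _ ht]

theorem covParam_mem_feasSet_iff (ht : 0 < t) (hPhi : (Phi U0 X0).PosDef) :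
    covParam U0 X0 K ∈ feasSet U0 X0 X1 ↔ specLt1 (ceClosedLoop U0 X0 X1 K) := by
  rw [feasSet, Set.mem_ofPred_eq, Xbar0_mul_covParam K hPhi,
    Xbar1_mul_covParam X1 K ht, eq_self, true_and]

theorem Jcost_covParam (Q : Matrix (Fin n) (Fin n) ℝ) (R : Matrix (Fin m) (Fin m) ℝ)
    (ht : 0 < t) (hPhi : (Phi U0 X0).PosDef) :
    Jcost U0 X0 X1 Q R (covParam U0 X0 K) =
      Matrix.trace ((Q + Kᵀ * R * K) * lyap (ceClosedLoop U0 X0 X1 K)) := by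
  set V := covParam U0 X0 K
  have hUV : Ubar U0 X0 * V = K := Ubar_mul_covParam K hPhi
  have hcost : Vᵀ * (Ubar U0 X0)ᵀ * R * Ubar U0 X0 * V = Kᵀ * R * K := by
    rw [Matrix.mul_assoc _ (Ubar U0 X0), hUV, ← Matrix.transpose_mul, hUV]
  rw [Jcost, SigV, hcost, Xbar1_mul_covParam X1 K ht]

theorem covParam_Ubar_mul (hPhi : (Phi U0 X0).PosDef) {V : Matrix (Fin m ⊕ Fin n) (Fin n) ℝ}
    (hV : Xbar0 U0 X0 * V = 1) : covParam U0 X0 (Ubar U0 X0 * V) = V := by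
  conv_lhs => rw [covParam, ← hV, Phi_eq_fromRows]
  exact inv_fromRows_mul_fromRows_mul (isUnit_det_fromRows_Ubar_Xbar0 hPhi) V

theorem feasSet_eq_image (ht : 0 < t) (hPhi : (Phi U0 X0).PosDef) :
    feasSet U0 X0 X1 = covParam U0 X0 '' {K | specLt1 (ceClosedLoop U0 X0 X1 K)} := by
  ext V
  constructor
  · intro hV
    have hV_eq := covParam_Ubar_mul hPhi hV.1
    refine ⟨Ubar U0 X0 * V, ?_, hV_eq⟩
    rw [Set.mem_ofPred_eq, ← covParam_mem_feasSet_iff X1 _ ht hPhi, hV_eq]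
    exact hV
  · rintro ⟨K, hK, rfl⟩
    exact (covParam_mem_feasSet_iff X1 K ht hPhi).2 hK

end CovarianceParameterization

theorem stmt_0_general {n m t : ℕ} (ht : 0 < t)
    (U0 : Matrix (Fin m) (Fin t) ℝ) (X0 X1 : Matrix (Fin n) (Fin t) ℝ)
    (Q : Matrix (Fin n) (Fin n) ℝ) (R : Matrix (Fin m) (Fin m) ℝ)
    (hPhi : (Phi U0 X0).PosDef) :
    (∀ K : Matrix (Fin m) (Fin n) ℝ,
        specLt1 (X1 * pinv (Dmat U0 X0) * Matrix.fromRows K (1 : Matrix (Fin n) (Fin n) ℝ)) ↔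
          (Phi U0 X0)⁻¹ * Matrix.fromRows K (1 : Matrix (Fin n) (Fin n) ℝ) ∈
            feasSet U0 X0 X1) ∧
    (∀ K : Matrix (Fin m) (Fin n) ℝ,
        specLt1 (X1 * pinv (Dmat U0 X0) * Matrix.fromRows K (1 : Matrix (Fin n) (Fin n) ℝ)) →
          Matrix.trace ((Q + Kᵀ * R * K) *
              lyap (X1 * pinv (Dmat U0 X0) * Matrix.fromRows K (1 : Matrix (Fin n) (Fin n) ℝ))) =
            Jcost U0 X0 X1 Q R
              ((Phi U0 X0)⁻¹ * Matrix.fromRows K (1 : Matrix (Fin n) (Fin n) ℝ))) ∧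
    Jstar U0 X0 X1 Q R =
      sInf ((fun K : Matrix (Fin m) (Fin n) ℝ =>
          Matrix.trace ((Q + Kᵀ * R * K) *
            lyap (X1 * pinv (Dmat U0 X0) * Matrix.fromRows K (1 : Matrix (Fin n) (Fin n) ℝ)))) ''
        {K | specLt1 (X1 * pinv (Dmat U0 X0) *
            Matrix.fromRows K (1 : Matrix (Fin n) (Fin n) ℝ))}) := by
  refine ⟨fun K => (covParam_mem_feasSet_iff X1 K ht hPhi).symm,
    fun K _ => (Jcost_covParam X1 K Q R ht hPhi).symm, ?_⟩
  rw [Jstar, feasSet_eq_image X1 ht hPhi, Set.image_image]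
  exact congrArg sInf (Set.image_congr fun K _ => Jcost_covParam X1 K Q R ht hPhi)

/-- Equivalence between the covariance parameterization of the LQR and the
indirect certainty-equivalence LQR (Lemma 1). -/
theorem stmt_0 {n m t : ℕ} (hn : 0 < n) (hm : 0 < m) (ht : 0 < t)
    (U0 : Matrix (Fin m) (Fin t) ℝ) (X0 X1 : Matrix (Fin n) (Fin t) ℝ)
    (Q : Matrix (Fin n) (Fin n) ℝ) (R : Matrix (Fin m) (Fin m) ℝ)
    (hQ : Q.PosDef) (hR : R.PosDef)
    (hrank : (Dmat U0 X0).rank = m + n) (hPhi : (Phi U0 X0).PosDef) :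
    (∀ K : Matrix (Fin m) (Fin n) ℝ,
        specLt1 (X1 * pinv (Dmat U0 X0) * Matrix.fromRows K (1 : Matrix (Fin n) (Fin n) ℝ)) ↔
          (Phi U0 X0)⁻¹ * Matrix.fromRows K (1 : Matrix (Fin n) (Fin n) ℝ) ∈
            feasSet U0 X0 X1) ∧
    (∀ K : Matrix (Fin m) (Fin n) ℝ,
        specLt1 (X1 * pinv (Dmat U0 X0) * Matrix.fromRows K (1 : Matrix (Fin n) (Fin n) ℝ)) →
          Matrix.trace ((Q + Kᵀ * R * K) *
              lyap (X1 * pinv (Dmat U0 X0) * Matrix.fromRows K (1 : Matrix (Fin n) (Fin n) ℝ))) =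
            Jcost U0 X0 X1 Q R
              ((Phi U0 X0)⁻¹ * Matrix.fromRows K (1 : Matrix (Fin n) (Fin n) ℝ))) ∧
    Jstar U0 X0 X1 Q R =
      sInf ((fun K : Matrix (Fin m) (Fin n) ℝ =>
          Matrix.trace ((Q + Kᵀ * R * K) *
            lyap (X1 * pinv (Dmat U0 X0) * Matrix.fromRows K (1 : Matrix (Fin n) (Fin n) ℝ)))) ''
        {K | specLt1 (X1 * pinv (Dmat U0 X0) *
            Matrix.fromRows K (1 : Matrix (Fin n) (Fin n) ℝ))}) :=
  stmt_0_general ht U0 X0 X1 Q R hPhi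
end
end

section
/- Correspondence between the covariance-parameterized LQR and its convex reparameterization: (1) for every (L, Σ) ∈ ℒ, the matrix Σ is invertible (indeed positive definite) and LΣ⁻¹ ∈ S; (2) for every V ∈ S, J(V) = min{ f(L, Σ) : (L, Σ) ∈ ℒ and LΣ⁻¹ = V }, and this minimum is attained. -/
open Matrix

noncomputable section

variable {n m t : ℕ}

/-!
For `(L, Σ) ∈ ℒ` the upper-left block gives `Σ ⪰ I`, and the Schur complement of the block `Σ`
says exactly that `V = LΣ⁻¹` satisfies the Lyapunov inequality `I + MΣMᵀ ⪯ Σ` with `M = X̄₁V`.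
Iterating it gives `∑_{i<N} Mⁱ(Mᵀ)ⁱ ⪯ Σ` for every `N`; taking traces, the powers of `M` are
square-summable in Frobenius norm, so they tend to `0`, and Gelfand's formula yields `ρ(M) < 1`.
Letting `N → ∞` the same bound reads `Σ_V ⪯ Σ`. Since `f(VΣ, Σ) = Tr((Q + VᵀŪ₀ᵀRŪ₀V)Σ)` is
monotone in `Σ`, this gives `J(V) ≤ f(L, Σ)`, with equality at `(VΣ_V, Σ_V)`, where the Lyapunov
inequality is the Lyapunov equation.
-/

open Filter Topology
open scoped NNReal ENNReal MatrixOrder ComplexOrder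

namespace Matrix
variable {ι 𝕜 : Type*} [Fintype ι] [RCLike 𝕜]

theorem isClosed_setOf_posSemidef : IsClosed {A : Matrix ι ι 𝕜 | A.PosSemidef} := by
  simp only [posSemidef_iff_dotProduct_mulVec, Set.ofPred_and, Set.ofPred_forall]
  refine .inter (isClosed_eq (by fun_prop) continuous_id) (isClosed_iInter fun x => ?_)
  exact isClosed_le continuous_const
    (continuous_const.dotProduct (continuous_id.matrix_mulVec continuous_const))

instance orderClosedTopology [DecidableEq ι] : OrderClosedTopology (Matrix ι ι 𝕜) :=
  ⟨isClosed_le_of_isClosed_nonneg <| by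
    simpa only [nonneg_iff_posSemidef] using isClosed_setOf_posSemidef⟩

theorem PosSemidef.trace_mul_nonneg [DecidableEq ι] {A B : Matrix ι ι 𝕜} (hA : A.PosSemidef)
    (hB : B.PosSemidef) : 0 ≤ (A * B).trace := by
  obtain ⟨C, hC⟩ : ∃ C : Matrix ι ι 𝕜, B = Cᴴ * C :=
    ⟨CFC.sqrt B, by rw [← star_eq_conjTranspose, (CFC.sqrt_nonneg B).isSelfAdjoint.star_eq,
      CFC.sqrt_mul_sqrt_self B hB.nonneg]⟩
  rw [hC, ← Matrix.mul_assoc, trace_mul_comm, ← Matrix.mul_assoc]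
  exact (hA.mul_mul_conjTranspose_same C).trace_nonneg

end Matrix

section SpectralRadius
attribute [local instance] Matrix.frobeniusNormedAddCommGroup Matrix.frobeniusNormedRing
  Matrix.frobeniusNormedAlgebra

variable {ι : Type*} [Fintype ι] [DecidableEq ι] {M : Matrix ι ι ℝ}

theorem Matrix.frobenius_norm_sq_eq_trace (B : Matrix ι ι ℝ) : ‖B‖ ^ 2 = (B * Bᵀ).trace := by
  rw [frobenius_norm_def, ← Real.rpow_natCast, ← Real.rpow_mul (by positivity)]
  norm_num [trace, mul_apply, sq]

theorem Matrix.frobenius_norm_map_ofReal (B : Matrix ι ι ℝ) : ‖B.map Complex.ofReal‖ = ‖B‖ :=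
  frobenius_norm_map_eq B _ Complex.norm_real

theorem Matrix.map_ofReal_pow (B : Matrix ι ι ℝ) (i : ℕ) :
    B.map Complex.ofReal ^ i = (B ^ i).map Complex.ofReal :=
  (map_pow Complex.ofRealHom.mapMatrix B i).symm

theorem specLt1_of_tendsto_pow (h : Tendsto (M ^ ·) atTop (𝓝 0)) : specLt1 M := by
  set A := M.map Complex.ofReal
  have hA : Tendsto (fun i => ‖A ^ i‖₊ * ‖(1 : Matrix ι ι ℂ)‖₊) atTop (𝓝 0) := by
    have := (tendsto_zero_iff_norm_tendsto_zero.mp h).mul_const ‖(1 : Matrix ι ι ℂ)‖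
    rw [zero_mul] at this
    rw [← NNReal.tendsto_coe]
    simpa [A, Matrix.map_ofReal_pow, Matrix.frobenius_norm_map_ofReal] using this
  obtain ⟨N, hN⟩ := eventually_atTop.mp (hA.eventually_lt_const zero_lt_one)
  calc spectralRadius ℂ A
      ≤ (‖A ^ (N + 1)‖₊ : ℝ≥0∞) ^ (1 / (N + 1) : ℝ) *
          (‖(1 : Matrix ι ι ℂ)‖₊ : ℝ≥0∞) ^ (1 / (N + 1) : ℝ) :=
        spectrum.spectralRadius_le_pow_nnnorm_pow_one_div ℂ A N
    _ = ((‖A ^ (N + 1)‖₊ * ‖(1 : Matrix ι ι ℂ)‖₊ : ℝ≥0) : ℝ≥0∞) ^ (1 / (N + 1) : ℝ) := by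
        rw [ENNReal.coe_mul, ENNReal.mul_rpow_of_nonneg _ _ (by positivity)]
    _ < 1 := ENNReal.rpow_lt_one (by exact_mod_cast hN (N + 1) N.le_succ) (by positivity)

theorem exists_norm_pow_le_geometric (h : specLt1 M) :
    ∃ r : ℝ, 0 ≤ r ∧ r < 1 ∧ ∀ᶠ i in atTop, ‖M ^ i‖ ≤ r ^ i := by
  obtain ⟨r, hr0, hρr, hr1⟩ := ENNReal.lt_iff_exists_real_btwn.mp h
  refine ⟨r, hr0, by simpa using hr1, ?_⟩
  have hev := (spectrum.pow_norm_pow_one_div_tendsto_nhds_spectralRadius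
    (M.map Complex.ofReal)).eventually_lt_const hρr
  filter_upwards [hev, eventually_ge_atTop 1] with i hi hi1
  rw [ENNReal.ofReal_lt_ofReal_iff_of_nonneg (by positivity), Matrix.map_ofReal_pow,
    Matrix.frobenius_norm_map_ofReal, one_div] at hi
  calc ‖M ^ i‖ = (‖M ^ i‖ ^ (i⁻¹ : ℝ)) ^ i :=
        (Real.rpow_inv_natCast_pow (norm_nonneg _) (by omega)).symm
    _ ≤ r ^ i := pow_le_pow_left₀ (by positivity) hi.le i

theorem summable_pow_mul_transpose_pow (h : specLt1 M) :
    Summable fun i : ℕ => M ^ i * Mᵀ ^ i := by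
  obtain ⟨r, hr0, hr1, hr⟩ := exists_norm_pow_le_geometric h
  refine Summable.of_norm_bounded_eventually_nat
    (summable_geometric_of_lt_one (by positivity) (by nlinarith : r ^ 2 < 1)) ?_
  filter_upwards [hr] with i hi
  calc ‖M ^ i * Mᵀ ^ i‖ ≤ ‖M ^ i‖ * ‖(M ^ i)ᵀ‖ := by
        rw [transpose_pow]; exact norm_mul_le _ _
    _ ≤ r ^ i * r ^ i := by
        rw [frobenius_norm_transpose]; exact mul_le_mul hi hi (norm_nonneg _) (by positivity)
    _ = (r ^ 2) ^ i := by ring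

theorem specLt1_of_sum_pow_mul_transpose_pow_le {S : Matrix ι ι ℝ}
    (h : ∀ N, ∑ i ∈ Finset.range N, M ^ i * Mᵀ ^ i ≤ S) : specLt1 M := by
  have hsum : Summable fun i => ‖M ^ i‖ ^ 2 := by
    refine summable_of_sum_range_le (c := S.trace) (fun i => by positivity) fun N => ?_
    simp_rw [Matrix.frobenius_norm_sq_eq_trace, transpose_pow, ← trace_sum]
    simpa only [trace_sub, sub_nonneg] using (le_iff.mp (h N)).trace_nonneg
  refine specLt1_of_tendsto_pow (tendsto_zero_iff_norm_tendsto_zero.mpr ?_)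
  simpa using (hsum.tendsto_atTop_zero).sqrt

end SpectralRadius

section Lyapunov

variable {ι : Type*} [Fintype ι] [DecidableEq ι] {M S : Matrix ι ι ℝ}

omit [DecidableEq ι] in
theorem Matrix.mul_mul_transpose_le_mul_mul_transpose {A B : Matrix ι ι ℝ} (h : A ≤ B)
    (C : Matrix ι ι ℝ) : C * A * Cᵀ ≤ C * B * Cᵀ := by
  simpa only [star_eq_conjTranspose, conjTranspose_eq_transpose_of_trivial] using
    star_right_conjugate_le_conjugate h C

theorem pow_mul_transpose_pow_nonneg (M : Matrix ι ι ℝ) (i : ℕ) : 0 ≤ M ^ i * Mᵀ ^ i := by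
  simpa [← transpose_pow, conjTranspose_eq_transpose_of_trivial] using
    (posSemidef_self_mul_conjTranspose (M ^ i)).nonneg

theorem sum_pow_mul_transpose_pow_add_le (hS : 1 + M * S * Mᵀ ≤ S) (N : ℕ) :
    ∑ i ∈ Finset.range N, M ^ i * Mᵀ ^ i + M ^ N * S * Mᵀ ^ N ≤ S := by
  induction N with
  | zero => simp
  | succ N ih =>
    calc ∑ i ∈ Finset.range (N + 1), M ^ i * Mᵀ ^ i + M ^ (N + 1) * S * Mᵀ ^ (N + 1)
        = ∑ i ∈ Finset.range N, M ^ i * Mᵀ ^ i + M ^ N * (1 + M * S * Mᵀ) * (M ^ N)ᵀ := by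
          rw [Finset.sum_range_succ, transpose_pow, pow_succ M, pow_succ' Mᵀ, Matrix.mul_add,
            Matrix.add_mul, Matrix.mul_one, add_assoc]
          simp only [Matrix.mul_assoc]
      _ ≤ ∑ i ∈ Finset.range N, M ^ i * Mᵀ ^ i + M ^ N * S * (M ^ N)ᵀ := by
          grw [Matrix.mul_mul_transpose_le_mul_mul_transpose hS]
      _ ≤ S := by rwa [transpose_pow]

theorem sum_pow_mul_transpose_pow_le (hS₀ : 0 ≤ S) (hS : 1 + M * S * Mᵀ ≤ S) (N : ℕ) :
    ∑ i ∈ Finset.range N, M ^ i * Mᵀ ^ i ≤ S := by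
  refine le_trans (le_add_of_nonneg_right ?_) (sum_pow_mul_transpose_pow_add_le hS N)
  simpa [transpose_pow] using Matrix.mul_mul_transpose_le_mul_mul_transpose hS₀ (M ^ N)

theorem specLt1_of_lyapunov_le (hS₀ : 0 ≤ S) (hS : 1 + M * S * Mᵀ ≤ S) : specLt1 M :=
  specLt1_of_sum_pow_mul_transpose_pow_le (sum_pow_mul_transpose_pow_le hS₀ hS)

end Lyapunov

section LyapunovSolution

variable {k : ℕ} {M S : Matrix (Fin k) (Fin k) ℝ}

theorem lyap_eq_one_add (h : specLt1 M) : lyap M = 1 + M * lyap M * Mᵀ := by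
  have hs := summable_pow_mul_transpose_pow h
  calc lyap M = M ^ 0 * Mᵀ ^ 0 + ∑' i, M * (M ^ i * Mᵀ ^ i) * Mᵀ := by
        rw [lyap, hs.tsum_eq_zero_add]
        congr 1
        refine tsum_congr fun i => ?_
        rw [pow_succ' M, pow_succ Mᵀ]
        simp only [Matrix.mul_assoc]
    _ = 1 + M * lyap M * Mᵀ := by
        rw [(hs.mul_left M).tsum_mul_right, hs.tsum_mul_left, pow_zero, pow_zero, Matrix.mul_one,
          lyap]

-- No summability is needed: a non-summable `tsum` is `0`.
theorem lyap_nonneg (M : Matrix (Fin k) (Fin k) ℝ) : 0 ≤ lyap M :=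
  tsum_nonneg (pow_mul_transpose_pow_nonneg M)

theorem one_le_lyap (h : specLt1 M) : 1 ≤ lyap M := by
  rw [lyap_eq_one_add h]
  refine le_add_of_nonneg_right ?_
  simpa using Matrix.mul_mul_transpose_le_mul_mul_transpose (lyap_nonneg M) M

theorem lyap_posDef (h : specLt1 M) : (lyap M).PosDef := by
  simpa using PosDef.posSemidef_add (Matrix.le_iff.mp (one_le_lyap h)) PosDef.one

theorem lyap_le (h : specLt1 M) (hS₀ : 0 ≤ S) (hS : 1 + M * S * Mᵀ ≤ S) : lyap M ≤ S :=
  (summable_pow_mul_transpose_pow h).tsum_le_of_sum_range_le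
    (sum_pow_mul_transpose_pow_le hS₀ hS)

end LyapunovSolution

section Reparameterization

variable {U0 : Matrix (Fin m) (Fin t) ℝ} {X0 X1 : Matrix (Fin n) (Fin t) ℝ}
  {Q : Matrix (Fin n) (Fin n) ℝ} {R : Matrix (Fin m) (Fin m) ℝ}
  {L V : Matrix (Fin m ⊕ Fin n) (Fin n) ℝ} {Sg : Matrix (Fin n) (Fin n) ℝ}

theorem one_le_of_mem_repSet (h : (L, Sg) ∈ repSet U0 X0 X1) : 1 ≤ Sg :=
  Matrix.le_iff.mpr (h.2.2.submatrix Sum.inl)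

theorem posDef_of_mem_repSet (h : (L, Sg) ∈ repSet U0 X0 X1) : Sg.PosDef := by
  simpa using PosDef.posSemidef_add (Matrix.le_iff.mp (one_le_of_mem_repSet h)) PosDef.one

theorem lyapunov_le_of_mem_repSet (h : (L, Sg) ∈ repSet U0 X0 X1) :
    1 + Xbar1 U0 X0 X1 * (L * Sg⁻¹) * Sg * (Xbar1 U0 X0 X1 * (L * Sg⁻¹))ᵀ ≤ Sg := by
  have hSg := posDef_of_mem_repSet h
  have := hSg.isUnit.invertible
  have hblk : (fromBlocks (Sg - 1) (Xbar1 U0 X0 X1 * L) (Xbar1 U0 X0 X1 * L)ᴴ Sg).PosSemidef := by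
    simpa only [conjTranspose_eq_transpose_of_trivial] using h.2.2
  rw [PosDef.fromBlocks₂₂ _ _ hSg] at hblk
  have hdet : IsUnit Sg.det := (isUnit_iff_isUnit_det _).mp hSg.isUnit
  have e : Xbar1 U0 X0 X1 * (L * Sg⁻¹) * Sg * (Xbar1 U0 X0 X1 * (L * Sg⁻¹))ᵀ =
      Xbar1 U0 X0 X1 * L * Sg⁻¹ * (Xbar1 U0 X0 X1 * L)ᴴ := by
    simp only [conjTranspose_eq_transpose_of_trivial, transpose_mul, transpose_nonsing_inv,
      h.1.eq, Matrix.mul_assoc, mul_nonsing_inv_cancel_left _ _ hdet]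
  rw [Matrix.le_iff, ← sub_sub, e]
  exact hblk

theorem mem_feasSet_of_mem_repSet (h : (L, Sg) ∈ repSet U0 X0 X1) :
    L * Sg⁻¹ ∈ feasSet U0 X0 X1 := by
  have hSg := posDef_of_mem_repSet h
  have hX : Xbar0 U0 X0 * L = Sg := h.2.1.symm
  refine ⟨?_, specLt1_of_lyapunov_le hSg.posSemidef.nonneg (lyapunov_le_of_mem_repSet h)⟩
  rw [← Matrix.mul_assoc, hX, mul_nonsing_inv _ ((isUnit_iff_isUnit_det _).mp hSg.isUnit)]

theorem fRep_mul_self (hsymm : Sg.IsSymm) (hSg : IsUnit Sg.det) :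
    fRep U0 X0 Q R (V * Sg) Sg = ((Q + Vᵀ * (Ubar U0 X0)ᵀ * R * Ubar U0 X0 * V) * Sg).trace := by
  rw [fRep, mul_nonsing_inv_cancel_right _ _ hSg, transpose_mul, hsymm.eq, Matrix.add_mul,
    trace_add]
  congr 1
  simp only [Matrix.mul_assoc]
  rw [← Matrix.mul_assoc V Sg, trace_mul_comm]
  simp only [Matrix.mul_assoc]

theorem mem_repSet_of_mem_feasSet (hV : V ∈ feasSet U0 X0 X1) :
    (V * SigV U0 X0 X1 V, SigV U0 X0 X1 V) ∈ repSet U0 X0 X1 := by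
  have hSig : (SigV U0 X0 X1 V).PosDef := lyap_posDef hV.2
  have := hSig.isUnit.invertible
  have hsymm : (SigV U0 X0 X1 V).IsSymm := isHermitian_iff_isSymm.mp hSig.isHermitian
  refine ⟨hsymm, by rw [← Matrix.mul_assoc, hV.1, Matrix.one_mul], ?_⟩
  dsimp only
  rw [← conjTranspose_eq_transpose_of_trivial, PosDef.fromBlocks₂₂ _ _ hSig]
  have hdet : IsUnit (SigV U0 X0 X1 V).det := (isUnit_iff_isUnit_det _).mp hSig.isUnit
  have hfix : SigV U0 X0 X1 V =
      1 + Xbar1 U0 X0 X1 * V * SigV U0 X0 X1 V * (Xbar1 U0 X0 X1 * V)ᵀ :=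
    lyap_eq_one_add hV.2
  have e : Xbar1 U0 X0 X1 * (V * SigV U0 X0 X1 V) * (SigV U0 X0 X1 V)⁻¹ *
      (Xbar1 U0 X0 X1 * (V * SigV U0 X0 X1 V))ᴴ =
      Xbar1 U0 X0 X1 * V * SigV U0 X0 X1 V * (Xbar1 U0 X0 X1 * V)ᵀ := by
    simp only [conjTranspose_eq_transpose_of_trivial, transpose_mul, hsymm.eq,
      Matrix.mul_assoc, mul_nonsing_inv_cancel_left _ _ hdet]
  rw [e, sub_sub, ← hfix, sub_self]
  exact PosSemidef.zero

theorem stageCost_posSemidef (hQ : Q.PosSemidef) (hR : R.PosSemidef)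
    (V : Matrix (Fin m ⊕ Fin n) (Fin n) ℝ) :
    (Q + Vᵀ * (Ubar U0 X0)ᵀ * R * Ubar U0 X0 * V).PosSemidef := by
  have := hR.conjTranspose_mul_mul_same (Ubar U0 X0 * V)
  simp only [conjTranspose_eq_transpose_of_trivial, transpose_mul, Matrix.mul_assoc] at this ⊢
  exact hQ.add this

theorem Jcost_le_fRep (hQ : Q.PosSemidef) (hR : R.PosSemidef) (h : (L, Sg) ∈ repSet U0 X0 X1) :
    Jcost U0 X0 X1 Q R (L * Sg⁻¹) ≤ fRep U0 X0 Q R L Sg := by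
  have hSg := posDef_of_mem_repSet h
  have hdet : IsUnit Sg.det := (isUnit_iff_isUnit_det _).mp hSg.isUnit
  have hle : SigV U0 X0 X1 (L * Sg⁻¹) ≤ Sg :=
    lyap_le (mem_feasSet_of_mem_repSet h).2 hSg.posSemidef.nonneg (lyapunov_le_of_mem_repSet h)
  have hA := stageCost_posSemidef (U0 := U0) (X0 := X0) hQ hR (L * Sg⁻¹)
  calc Jcost U0 X0 X1 Q R (L * Sg⁻¹)
      ≤ ((Q + (L * Sg⁻¹)ᵀ * (Ubar U0 X0)ᵀ * R * Ubar U0 X0 * (L * Sg⁻¹)) * Sg).trace := by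
        have key := hA.trace_mul_nonneg (Matrix.le_iff.mp hle)
        rw [Matrix.mul_sub, trace_sub, sub_nonneg] at key
        exact key
    _ = fRep U0 X0 Q R (L * Sg⁻¹ * Sg) Sg := (fRep_mul_self h.1 hdet).symm
    _ = fRep U0 X0 Q R L Sg := by rw [nonsing_inv_mul_cancel_right _ _ hdet]

end Reparameterization

theorem stmt_7_general {n m t : ℕ}
    (U0 : Matrix (Fin m) (Fin t) ℝ) (X0 X1 : Matrix (Fin n) (Fin t) ℝ)
    (Q : Matrix (Fin n) (Fin n) ℝ) (R : Matrix (Fin m) (Fin m) ℝ)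
    (hQ : Q.PosDef) (hR : R.PosDef) :
    (∀ p ∈ repSet U0 X0 X1, p.2.PosDef ∧ p.1 * p.2⁻¹ ∈ feasSet U0 X0 X1) ∧
    ∀ V ∈ feasSet U0 X0 X1,
      IsLeast {r : ℝ | ∃ p ∈ repSet U0 X0 X1, p.1 * p.2⁻¹ = V ∧ r = fRep U0 X0 Q R p.1 p.2}
        (Jcost U0 X0 X1 Q R V) := by
  refine ⟨fun p hp => ⟨posDef_of_mem_repSet hp, mem_feasSet_of_mem_repSet hp⟩,
    fun V hV => ⟨?_, ?_⟩⟩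
  · have hSig := lyap_posDef hV.2
    have hdet := (isUnit_iff_isUnit_det _).mp hSig.isUnit
    exact ⟨_, mem_repSet_of_mem_feasSet hV, mul_nonsing_inv_cancel_right _ _ hdet,
      (fRep_mul_self (isHermitian_iff_isSymm.mp hSig.isHermitian) hdet).symm⟩
  · rintro r ⟨⟨L, Sg⟩, hp, rfl, rfl⟩
    exact Jcost_le_fRep hQ.posSemidef hR.posSemidef hp

/-- Correspondence between the covariance-parameterized LQR and its convex
reparameterization (Lemma 9). -/
theorem stmt_7 {n m t : ℕ} (hn : 0 < n) (hm : 0 < m) (ht : 0 < t)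
    (U0 : Matrix (Fin m) (Fin t) ℝ) (X0 X1 : Matrix (Fin n) (Fin t) ℝ)
    (Q : Matrix (Fin n) (Fin n) ℝ) (R : Matrix (Fin m) (Fin m) ℝ)
    (hQ : Q.PosDef) (hR : R.PosDef)
    (hrank : (Dmat U0 X0).rank = m + n) :
    (∀ p ∈ repSet U0 X0 X1, p.2.PosDef ∧ p.1 * p.2⁻¹ ∈ feasSet U0 X0 X1) ∧
    ∀ V ∈ feasSet U0 X0 X1,
      IsLeast {r : ℝ | ∃ p ∈ repSet U0 X0 X1, p.1 * p.2⁻¹ = V ∧ r = fRep U0 X0 Q R p.1 p.2}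
        (Jcost U0 X0 X1 Q R V) :=
  stmt_7_general U0 X0 X1 Q R hQ hR
end
end

section
/- Hessian identity for the reparameterized cost: for any symmetric positive definite Σ ∈ ℝ^{n×n}, any L, L̃ ∈ ℝ^{(m+n)×n}, and any symmetric Σ̃ ∈ ℝ^{n×n}, the second directional derivative of f at (L, Σ) along (L̃, Σ̃), i.e. (d²/dτ²)f(L + τL̃, Σ + τΣ̃)|_{τ=0}, equals 2‖R^{1/2}(Ū₀L̃ − Ū₀LΣ⁻¹Σ̃)Σ^{-1/2}‖_F², and in particular is nonnegative. -/
open Matrix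

noncomputable section

variable {n m t : ℕ}

/-! Along the line `τ ↦ (L + τL̃, Σ + τΣ̃)` the cost is an affine function plus
`tr((Σ + τΣ̃)⁻¹ N(τ))` with `N(τ) = (L + τL̃)ᵀ M (L + τL̃)` quadratic in `τ` and `M = Ū₀ᵀRŪ₀`.
Differentiating `(Σ + τΣ̃)⁻¹` twice gives, with `P = Σ⁻¹`, the second derivative
`2 tr(PΣ̃PΣ̃P N₀) - 2 tr(PΣ̃P N₁) + 2 tr(P N₂)`. Cyclicity of the trace and the symmetry of `P`
and `Σ̃` turn this into `2 tr(P Eᵀ M E)` with `E = L̃ - LPΣ̃`; writing `M = (R^{1/2}Ū₀)ᵀ(R^{1/2}Ū₀)`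
and `P = Σ^{-1/2}Σ^{-1/2}` exhibits it as `2‖R^{1/2}Ū₀ E Σ^{-1/2}‖_F²`. -/

open Topology

theorem iteratedDeriv_two_eq_of_hasDerivAt {f f' : ℝ → ℝ} {f'' x : ℝ}
    (hf : ∀ᶠ y in 𝓝 x, HasDerivAt f (f' y) y) (hf' : HasDerivAt f' f'' x) :
    iteratedDeriv 2 f x = f'' := by
  have hderiv : deriv f =ᶠ[𝓝 x] f' := hf.mono fun _ hy => hy.deriv
  rw [iteratedDeriv_succ, iteratedDeriv_one, hderiv.deriv_eq, hf'.deriv]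

section Paths

variable {E : Type*} [NormedAddCommGroup E] [NormedSpace ℝ E]

theorem hasDerivAt_add_smul (a b : E) (τ : ℝ) : HasDerivAt (fun s : ℝ => a + s • b) b τ :=
  (((hasDerivAt_id τ).smul_const b).const_add a).congr_deriv (by simp)

theorem hasDerivAt_quadratic (a₀ a₁ a₂ : E) (τ : ℝ) :
    HasDerivAt (fun s : ℝ => a₀ + s • a₁ + s ^ 2 • a₂) (a₁ + (2 * τ) • a₂) τ :=
  ((hasDerivAt_add_smul a₀ a₁ τ).add ((hasDerivAt_pow 2 τ).smul_const a₂)).congr_deriv (by simp)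

end Paths

section MatrixCalculus

-- `hasFDerivAt_ringInverse` needs a normed ring; any matrix norm induces the product topology.
attribute [local instance] Matrix.linftyOpNormedAddCommGroup Matrix.linftyOpNormedRing
  Matrix.linftyOpNormedAlgebra

variable {ι : Type*} [Fintype ι] [DecidableEq ι]

theorem hasDerivAt_trace {F : ℝ → Matrix ι ι ℝ} {F' : Matrix ι ι ℝ} {τ : ℝ}
    (h : HasDerivAt F F' τ) : HasDerivAt (fun s => trace (F s)) (trace F') τ :=
  (traceLinearMap ι ℝ ℝ).toContinuousLinearMap.hasFDerivAt.comp_hasDerivAt τ h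

theorem hasDerivAt_inv_add_smul (A B : Matrix ι ι ℝ) {τ : ℝ} (h : IsUnit (A + τ • B)) :
    HasDerivAt (fun s : ℝ => (A + s • B)⁻¹)
      (-((A + τ • B)⁻¹ * B * (A + τ • B)⁻¹)) τ := by
  simp only [nonsing_inv_eq_ringInverse]
  refine ((hasFDerivAt_ringInverse h.unit).comp_hasDerivAt τ
    (hasDerivAt_add_smul A B τ)).congr_deriv ?_
  simp [mul_assoc, nonsing_inv_eq_ringInverse]

theorem iteratedDeriv_two_trace_inv_mul_quadratic (A B N₀ N₁ N₂ : Matrix ι ι ℝ)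
    (hA : IsUnit A) (c d : ℝ) :
    iteratedDeriv 2
        (fun τ : ℝ => c + τ * d + trace ((A + τ • B)⁻¹ * (N₀ + τ • N₁ + τ ^ 2 • N₂))) 0 =
      2 * trace (A⁻¹ * B * A⁻¹ * B * A⁻¹ * N₀) - 2 * trace (A⁻¹ * B * A⁻¹ * N₁) +
        2 * trace (A⁻¹ * N₂) := by
  set P : ℝ → Matrix ι ι ℝ := fun τ => (A + τ • B)⁻¹
  set N : ℝ → Matrix ι ι ℝ := fun τ => N₀ + τ • N₁ + τ ^ 2 • N₂
  have hP0 : HasDerivAt P (-(A⁻¹ * B * A⁻¹)) 0 := by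
    simpa [P] using hasDerivAt_inv_add_smul A B (τ := 0) (by simpa using hA)
  have hunits : ∀ᶠ τ in 𝓝 (0 : ℝ), IsUnit (A + τ • B) :=
    (continuous_const.add (continuous_id.smul continuous_const)).continuousAt.eventually
      (Units.isOpen.mem_nhds (by simpa using hA))
  refine iteratedDeriv_two_eq_of_hasDerivAt
    (f' := fun τ => d + trace (-(P τ * B * P τ) * N τ + P τ * (N₁ + (2 * τ) • N₂)))
    (hunits.mono fun τ hτ => ?_) ?_
  · have hline : HasDerivAt (fun s : ℝ => c + s * d) d τ := by
      simpa using ((hasDerivAt_id τ).mul_const d).const_add c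
    exact hline.add (hasDerivAt_trace
      ((hasDerivAt_inv_add_smul A B hτ).mul (hasDerivAt_quadratic N₀ N₁ N₂ τ)))
  · have hN' : HasDerivAt (fun s : ℝ => N₁ + (2 * s) • N₂) ((2 : ℝ) • N₂) 0 := by
      exact ((((hasDerivAt_id (0 : ℝ)).const_mul 2).smul_const N₂).const_add N₁).congr_deriv
        (by simp)
    have h := (hasDerivAt_trace
      ((((hP0.mul_const B).mul hP0).neg.mul (hasDerivAt_quadratic N₀ N₁ N₂ 0)).add
        (hP0.mul hN'))).const_add d
    refine h.congr_deriv ?_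
    simp only [P, Pi.mul_apply, Pi.neg_apply, zero_smul, add_zero, mul_zero, neg_mul, mul_neg,
      add_mul, mul_add, trace_add, trace_neg, Matrix.mul_smul, trace_smul, smul_eq_mul, mul_assoc]
    ring

end MatrixCalculus

section TraceAlgebra

variable {ι κ α : Type*} [Fintype ι] [Fintype κ] [Fintype α]

omit [Fintype ι] in
theorem Matrix.PosDef.transpose_eq {A : Matrix ι ι ℝ} (hA : A.PosDef) : Aᵀ = A :=
  (conjTranspose_eq_transpose_of_trivial A).symm.trans hA.isHermitian.eq

theorem frobNorm_sq_eq_trace (X : Matrix α ι ℝ) : frobNorm X ^ 2 = trace (X * Xᵀ) := by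
  rw [frobNorm, Real.sq_sqrt (by positivity)]
  simp [trace, mul_apply, sq]

theorem frobNorm_mul_sq_eq_trace (X : Matrix α ι ℝ) {S P : Matrix ι ι ℝ} (hS : S * Sᵀ = P) :
    frobNorm (X * S) ^ 2 = trace (P * (Xᵀ * X)) := by
  rw [frobNorm_sq_eq_trace, transpose_mul, Matrix.mul_assoc, ← Matrix.mul_assoc S, hS,
    trace_mul_comm, Matrix.mul_assoc]

theorem trace_mul_mul_transpose_mul (L : Matrix κ ι ℝ) (P : Matrix ι ι ℝ) (M : Matrix κ κ ℝ) :
    trace (L * P * Lᵀ * M) = trace (P * (Lᵀ * M * L)) := by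
  rw [Matrix.mul_assoc, trace_mul_comm, ← Matrix.mul_assoc, trace_mul_comm]

omit [Fintype ι] in
theorem transpose_add_smul_mul_mul_add_smul (L L' : Matrix κ ι ℝ) (M : Matrix κ κ ℝ) (τ : ℝ) :
    (L + τ • L')ᵀ * M * (L + τ • L') =
      Lᵀ * M * L + τ • (L'ᵀ * M * L + Lᵀ * M * L') + τ ^ 2 • (L'ᵀ * M * L') := by
  simp only [transpose_add, transpose_smul, Matrix.add_mul, Matrix.mul_add, Matrix.smul_mul,
    Matrix.mul_smul]
  module

theorem trace_hessian_eq_trace_transpose_mul_mul (M : Matrix κ κ ℝ) (L L' : Matrix κ ι ℝ)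
    {P B : Matrix ι ι ℝ} (hP : Pᵀ = P) (hB : Bᵀ = B) :
    trace (P * B * P * B * P * (Lᵀ * M * L)) - trace (P * B * P * (L'ᵀ * M * L + Lᵀ * M * L')) +
        trace (P * (L'ᵀ * M * L')) =
      trace (P * ((L' - L * P * B)ᵀ * M * (L' - L * P * B))) := by
  have h₁ : trace (P * (L'ᵀ * M * (L * P * B))) = trace (P * B * P * (L'ᵀ * M * L)) := by
    rw [show P * (L'ᵀ * M * (L * P * B)) = P * (L'ᵀ * M * L) * (P * B) by
      simp only [Matrix.mul_assoc], trace_mul_comm]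
    simp only [Matrix.mul_assoc]
  have h₂ : trace (P * ((L * P * B)ᵀ * M * (L * P * B))) =
      trace (P * B * P * B * P * (Lᵀ * M * L)) := by
    rw [show P * ((L * P * B)ᵀ * M * (L * P * B)) = P * B * P * (Lᵀ * M * L) * (P * B) by
      simp only [transpose_mul, hP, hB, Matrix.mul_assoc], trace_mul_comm]
    simp only [Matrix.mul_assoc]
  have h₃ : P * ((L * P * B)ᵀ * M * L') = P * B * P * (Lᵀ * M * L') := by
    simp only [transpose_mul, hP, hB, Matrix.mul_assoc]
  simp only [transpose_sub, Matrix.sub_mul, Matrix.mul_sub, trace_sub, Matrix.mul_add, trace_add,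
    h₃]
  linarith

end TraceAlgebra

theorem stmt_9_general {n m t : ℕ}
    (U0 : Matrix (Fin m) (Fin t) ℝ) (X0 : Matrix (Fin n) (Fin t) ℝ)
    (Q : Matrix (Fin n) (Fin n) ℝ) (R : Matrix (Fin m) (Fin m) ℝ)
    (Sg : Matrix (Fin n) (Fin n) ℝ) (hSg : Sg.PosDef)
    (L Lt : Matrix (Fin m ⊕ Fin n) (Fin n) ℝ)
    (St : Matrix (Fin n) (Fin n) ℝ) (hSt : St.IsSymm)
    (Rh : Matrix (Fin m) (Fin m) ℝ) (hRh : Rh.PosDef) (hRh2 : Rh * Rh = R)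
    (Sh : Matrix (Fin n) (Fin n) ℝ) (hSh : Sh.PosDef) (hSh2 : Sh * Sh = Sg) :
    iteratedDeriv 2 (fun τ : ℝ => fRep U0 X0 Q R (L + τ • Lt) (Sg + τ • St)) 0 =
      2 * frobNorm (Rh * (Ubar U0 X0 * Lt - Ubar U0 X0 * L * Sg⁻¹ * St) * Sh⁻¹) ^ 2 ∧
    0 ≤ iteratedDeriv 2 (fun τ : ℝ => fRep U0 X0 Q R (L + τ • Lt) (Sg + τ • St)) 0 := by
  set U := Ubar U0 X0
  set M := Uᵀ * R * U
  have hfRep : (fun τ : ℝ => fRep U0 X0 Q R (L + τ • Lt) (Sg + τ • St)) = fun τ =>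
      trace (Q * Sg) + τ * trace (Q * St) + trace ((Sg + τ • St)⁻¹ *
        (Lᵀ * M * L + τ • (Ltᵀ * M * L + Lᵀ * M * Lt) + τ ^ 2 • (Ltᵀ * M * Lt))) := by
    funext τ
    rw [fRep, ← transpose_add_smul_mul_mul_add_smul, ← trace_mul_mul_transpose_mul]
    simp only [M, Matrix.mul_add, trace_add, Matrix.mul_smul, trace_smul, smul_eq_mul,
      Matrix.mul_assoc]
    rfl
  have hSgT : Sg⁻¹ᵀ = Sg⁻¹ := by rw [transpose_nonsing_inv, hSg.transpose_eq]
  have hShS : Sh⁻¹ * Sh⁻¹ᵀ = Sg⁻¹ := by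
    rw [transpose_nonsing_inv, hSh.transpose_eq, ← Matrix.mul_inv_rev, hSh2]
  have hquad : ∀ E : Matrix (Fin m ⊕ Fin n) (Fin n) ℝ,
      (Rh * U * E)ᵀ * (Rh * U * E) = Eᵀ * M * E := fun E => by
    simp only [M, transpose_mul, hRh.transpose_eq, ← hRh2, Matrix.mul_assoc]
  have hhess : iteratedDeriv 2 (fun τ : ℝ => fRep U0 X0 Q R (L + τ • Lt) (Sg + τ • St)) 0 =
      2 * frobNorm (Rh * (U * Lt - U * L * Sg⁻¹ * St) * Sh⁻¹) ^ 2 := by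
    rw [hfRep, iteratedDeriv_two_trace_inv_mul_quadratic _ _ _ _ _ hSg.isUnit,
      show Rh * (U * Lt - U * L * Sg⁻¹ * St) = Rh * U * (Lt - L * Sg⁻¹ * St) by
        simp only [Matrix.mul_sub, Matrix.mul_assoc],
      frobNorm_mul_sq_eq_trace _ hShS, hquad,
      ← trace_hessian_eq_trace_transpose_mul_mul M L Lt hSgT hSt]
    ring
  exact ⟨hhess, hhess ▸ by positivity⟩

/-- Hessian identity for the reparameterized cost `f` (proof of Lemma 10):
the second directional derivative equals
`2‖R^{1/2}(Ū₀L̃ − Ū₀LΣ⁻¹Σ̃)Σ^{-1/2}‖_F²` and in particular is nonnegative. -/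
theorem stmt_9 {n m t : ℕ} (hn : 0 < n) (hm : 0 < m) (ht : 0 < t)
    (U0 : Matrix (Fin m) (Fin t) ℝ) (X0 : Matrix (Fin n) (Fin t) ℝ)
    (Q : Matrix (Fin n) (Fin n) ℝ) (R : Matrix (Fin m) (Fin m) ℝ)
    (hQ : Q.PosDef) (hR : R.PosDef)
    (hrank : (Dmat U0 X0).rank = m + n)
    (Sg : Matrix (Fin n) (Fin n) ℝ) (hSg : Sg.PosDef)
    (L Lt : Matrix (Fin m ⊕ Fin n) (Fin n) ℝ)
    (St : Matrix (Fin n) (Fin n) ℝ) (hSt : St.IsSymm)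
    (Rh : Matrix (Fin m) (Fin m) ℝ) (hRh : Rh.PosDef) (hRh2 : Rh * Rh = R)
    (Sh : Matrix (Fin n) (Fin n) ℝ) (hSh : Sh.PosDef) (hSh2 : Sh * Sh = Sg) :
    iteratedDeriv 2 (fun τ : ℝ => fRep U0 X0 Q R (L + τ • Lt) (Sg + τ • St)) 0 =
      2 * frobNorm (Rh * (Ubar U0 X0 * Lt - Ubar U0 X0 * L * Sg⁻¹ * St) * Sh⁻¹) ^ 2 ∧
    0 ≤ iteratedDeriv 2 (fun τ : ℝ => fRep U0 X0 Q R (L + τ • Lt) (Sg + τ • St)) 0 :=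
  stmt_9_general U0 X0 Q R Sg hSg L Lt St hSt Rh hRh hRh2 Sh hSh hSh2
end
end

section
/- Persistency of excitation of the Hankel matrix transfers to the data matrix: let U ∈ ℝ^{m×t} with columns u₀, …, u_{t−1} and let H_{n+1}(U) ∈ ℝ^{(n+1)m×(t−n)} be the block Hankel matrix whose (i, j) block entry is u_{i+j} for 0 ≤ i ≤ n, 0 ≤ j ≤ t−n−1 (assume t > n). Then σ̲(U) ≥ σ̲(H_{n+1}(U))/√(n+1); in particular, if σ̲(H_{n+1}(U)) ≥ γ√(t(n+1)) for some γ > 0, then σ̲(U) ≥ γ√t. -/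
open Matrix

noncomputable section

variable {n m t : ℕ}

/-- Persistency of excitation of the Hankel matrix transfers to the data
matrix (proof of Lemma 5). -/
theorem stmt_12 {m t n : ℕ} (htn : n < t) (U : Matrix (Fin m) (Fin t) ℝ)
    (H : Matrix (Fin (n + 1) × Fin m) (Fin (t - n)) ℝ)
    (hH : ∀ (i : Fin (n + 1)) (r : Fin m) (j : Fin (t - n)),
      H (i, r) j = U r ⟨i.1 + j.1, by have h1 := i.isLt; have h2 := j.isLt; omega⟩) :
    sigMin U ≥ sigMin H / Real.sqrt (n + 1) ∧
    ∀ γ : ℝ, 0 < γ → sigMin H ≥ γ * Real.sqrt (t * (n + 1)) →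
      sigMin U ≥ γ * Real.sqrt t := by
  have hsq : (0:ℝ) < Real.sqrt (n + 1) := Real.sqrt_pos.mpr (by positivity)
  -- key bound for unit vectors
  have key : ∀ u : Fin m → ℝ, eNorm u = 1 →
      sigMin H ≤ Real.sqrt (n + 1) * eNorm (U.vecMul u) := by
    intro u hu
    set v := U.vecMul u with hv
    set w : Fin (n + 1) × Fin m → ℝ := fun p => u p.2 / Real.sqrt (n + 1) with hw
    have hwnorm : eNorm w = 1 := by
      have : ∑ p : Fin (n + 1) × Fin m, w p ^ 2 = 1 := by
        rw [Fintype.sum_prod_type]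
        have : ∀ i : Fin (n+1), ∑ r, w (i, r) ^ 2 = 1 / (n+1) := by
          intro i
          have hsum : ∑ r, u r ^ 2 = 1 := by
            have := hu
            unfold eNorm at this
            have h0 : (0:ℝ) ≤ ∑ r, u r ^ 2 := by positivity
            nlinarith [Real.sq_sqrt h0]
          simp only [hw, div_pow, Real.sq_sqrt (by positivity : (0:ℝ) ≤ (n:ℝ)+1)]
          rw [← Finset.sum_div, hsum]
        simp [this]
        field_simp
      unfold eNorm
      rw [this, Real.sqrt_one]
    -- H.vecMul w j = (1/√(n+1)) * ∑ i, v (i+j)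
    have hHw : ∀ j : Fin (t - n), H.vecMul w j =
        (∑ i : Fin (n+1), v ⟨i.1 + j.1, by omega⟩) / Real.sqrt (n + 1) := by
      intro j
      unfold Matrix.vecMul
      simp only [dotProduct, Fintype.sum_prod_type]
      rw [Finset.sum_div]
      congr 1; ext i
      rw [hv]
      unfold Matrix.vecMul
      simp only [dotProduct, Finset.sum_div]
      refine Finset.sum_congr rfl fun r _ => ?_
      rw [hH i r j, hw]
      ring
    have hbound : ∑ j, H.vecMul w j ^ 2 ≤ (n + 1) * ∑ k, v k ^ 2 := by
      have step1 : ∀ j : Fin (t - n), H.vecMul w j ^ 2 ≤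
          ∑ i : Fin (n+1), v ⟨i.1 + j.1, by omega⟩ ^ 2 := by
        intro j
        rw [hHw j, div_pow, Real.sq_sqrt (by positivity : (0:ℝ) ≤ (n:ℝ)+1)]
        rw [div_le_iff₀ (by positivity)]
        have := sq_sum_le_card_mul_sum_sq
          (s := (Finset.univ : Finset (Fin (n+1))))
          (f := fun i => v ⟨i.1 + j.1, by omega⟩)
        simpa [mul_comm] using this
      calc ∑ j, H.vecMul w j ^ 2
          ≤ ∑ j : Fin (t-n), ∑ i : Fin (n+1), v ⟨i.1 + j.1, by omega⟩ ^ 2 :=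
            Finset.sum_le_sum fun j _ => step1 j
        _ = ∑ i : Fin (n+1), ∑ j : Fin (t-n), v ⟨i.1 + j.1, by omega⟩ ^ 2 :=
            Finset.sum_comm
        _ ≤ ∑ _i : Fin (n+1), ∑ k, v k ^ 2 := by
            apply Finset.sum_le_sum
            intro i _
            have hinj : Function.Injective
                (fun j : Fin (t-n) => (⟨i.1 + j.1, by omega⟩ : Fin t)) := by
              intro a b hab
              simp only [Fin.mk.injEq] at hab
              exact Fin.ext (by omega)
            calc ∑ j : Fin (t-n), v ⟨i.1 + j.1, by omega⟩ ^ 2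
                = ∑ k ∈ Finset.univ.image
                    (fun j : Fin (t-n) => (⟨i.1 + j.1, by omega⟩ : Fin t)), v k ^ 2 := by
                  rw [Finset.sum_image (fun a _ b _ h => hinj h)]
              _ ≤ ∑ k, v k ^ 2 := by
                  apply Finset.sum_le_sum_of_subset_of_nonneg (Finset.subset_univ _)
                  intros; positivity
        _ = (n + 1) * ∑ k, v k ^ 2 := by
            rw [Finset.sum_const, Finset.card_univ, Fintype.card_fin]
            push_cast; ring
    have hnorm : eNorm (H.vecMul w) ≤ Real.sqrt (n + 1) * eNorm v := by
      unfold eNorm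
      rw [← Real.sqrt_mul (by positivity)]
      exact Real.sqrt_le_sqrt hbound
    have hmem : eNorm (H.vecMul w) ∈
        {r : ℝ | ∃ u', eNorm u' = 1 ∧ r = eNorm (H.vecMul u')} :=
      ⟨w, hwnorm, rfl⟩
    have hbdd : BddBelow {r : ℝ | ∃ u', eNorm u' = 1 ∧ r = eNorm (H.vecMul u')} := by
      refine ⟨0, fun r hr => ?_⟩
      obtain ⟨u', _, rfl⟩ := hr
      exact Real.sqrt_nonneg _
    exact le_trans (csInf_le hbdd hmem) hnorm
  have hHnn : 0 ≤ sigMin H := Real.sInf_nonneg (fun r hr => by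
    obtain ⟨u', _, rfl⟩ := hr; exact Real.sqrt_nonneg _)
  have main : sigMin U ≥ sigMin H / Real.sqrt (n + 1) := by
    rcases Nat.eq_zero_or_pos m with hm | hm
    · subst hm
      have hUempty : {r : ℝ | ∃ u : Fin 0 → ℝ, eNorm u = 1 ∧ r = eNorm (U.vecMul u)} = ∅ := by
        ext r
        simp only [Set.mem_setOf_eq, Set.mem_empty_iff_false, iff_false]
        rintro ⟨u, hu, -⟩
        unfold eNorm at hu
        simp at hu
      have hHempty : {r : ℝ | ∃ u : Fin (n+1) × Fin 0 → ℝ,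
          eNorm u = 1 ∧ r = eNorm (H.vecMul u)} = ∅ := by
        ext r
        simp only [Set.mem_setOf_eq, Set.mem_empty_iff_false, iff_false]
        rintro ⟨u, hu, -⟩
        unfold eNorm at hu
        rw [Finset.sum_eq_zero (fun p _ => absurd p.2.2 (by omega))] at hu
        simp at hu
      unfold sigMin
      rw [hUempty, hHempty, Real.sInf_empty]
      simp
    · have hne : {r : ℝ | ∃ u : Fin m → ℝ, eNorm u = 1 ∧ r = eNorm (U.vecMul u)}.Nonempty := by
        refine ⟨_, fun r => if r = ⟨0, hm⟩ then 1 else 0, ?_, rfl⟩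
        unfold eNorm
        rw [Finset.sum_eq_single ⟨0, hm⟩]
        · simp
        · intro b _ hb; simp [hb]
        · simp
      apply le_csInf hne
      rintro r ⟨u, hu, rfl⟩
      rw [div_le_iff₀ hsq, mul_comm]
      exact key u hu
  refine ⟨main, fun γ hγ hγH => ?_⟩
  have : γ * Real.sqrt t = γ * Real.sqrt (t * (n+1)) / Real.sqrt (n+1) := by
    rw [Real.sqrt_mul (by positivity)]
    field_simp
  rw [this]
  calc γ * Real.sqrt (t * (n+1)) / Real.sqrt (n+1)
      ≤ sigMin H / Real.sqrt (n+1) := by gcongr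
    _ ≤ sigMin U := main
end
end
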